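/- Let M: E(T) → ℝ_+ with IM_p < 1 on all vertices, and define the rescaled function c(α) = M(α) / (1 − IM_p(b(α)))^{p/p′}. Then M is the co-potential of a positive measure on ∂T if and only if, for every edge α that is not a leaf, c(α) = S / (1 + S^{p′−1})^{p−1}, where S = Σ_{β child of α} c(β). -/

import Mathlib

open scoped ENNReal
open MeasureTheory

/-- A locally finite rooted tree, given by its set of edges. The root edge has no parent,
every other edge has a parent, and every edge has finitely many children. -/
structure RTree where
  E : Type
  root : E
  parent : E → Option E
  parent_root : parent root = none
  parent_isSome : ∀ α, α ≠ root → (parent α).isSome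
  level : E → ℕ
  level_root : level root = 0
  level_parent : ∀ α β, parent α = some β → level α = level β + 1
  locFin : ∀ α, {β | parent β = some α}.Finite

namespace RTree

variable (T : RTree)

/-- `Le T α β` : the edge `α` is an ancestor of (or equal to) the edge `β`,
i.e. `α ≤ β` in the natural partial order on edges. -/
def Le (α β : T.E) : Prop :=
  Relation.ReflTransGen (fun x y => T.parent y = some x) α β

/-- The boundary of `T`: half-infinite geodesics starting at the root edge. -/
structure Boundary where
  seq : ℕ → T.E
  seq_zero : seq 0 = T.root
  seq_parent : ∀ n, T.parent (seq (n + 1)) = some (seq n)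

/-- The boundary `∂T_α` of the tent over the edge `α`: boundary points whose
geodesic passes through `α`. -/
def tentB (α : T.E) : Set T.Boundary := {ζ | ∃ n, ζ.seq n = α}

/-- The standard topology on the boundary, with the tent boundaries as a basis. -/
def ttop : TopologicalSpace T.Boundary :=
  TopologicalSpace.generateFrom {s | ∃ α, s = T.tentB α}

/-- The Borel σ-algebra on the boundary. -/
def tborel : MeasurableSpace T.Boundary := @borel _ T.ttop

/-- The set of edges of the tent `T_α`. -/
def tentE (α : T.E) : Set T.E := {β | T.Le α β}

/-- The relative potential `I_α f (ζ)`, summing `f` over the edges of the geodesic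
from the root to `ζ` that lie in the tent `T_α`.  Taking `α` to be the root edge
gives the potential `If`. -/
noncomputable def relPot (α : T.E) (f : T.E → ℝ≥0∞) (ζ : T.Boundary) : ℝ≥0∞ :=
  ∑' n, Set.indicator (T.tentE α) f (ζ.seq n)

/-- The relative `p`-energy `‖f‖_{ℓ^p(E(T_α))}^p`. -/
noncomputable def relEnergy (p : ℝ) (α : T.E) (f : T.E → ℝ≥0∞) : ℝ≥0∞ :=
  ∑' β, Set.indicator (T.tentE α) (fun γ => f γ ^ p) β

/-- The relative `p`-capacity `c_{p,α}(E)` of `E ⊆ ∂T`, with the tent `T_α`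
as ambient tree. -/
noncomputable def relCap (p : ℝ) (α : T.E) (E : Set T.Boundary) : ℝ≥0∞ :=
  ⨅ f ∈ {f : T.E → ℝ≥0∞ | ∀ ζ ∈ E, 1 ≤ T.relPot α f ζ}, T.relEnergy p α f

/-- The `p`-capacity of a subset of the boundary. -/
noncomputable def cap (p : ℝ) (E : Set T.Boundary) : ℝ≥0∞ := T.relCap p T.root E

end RTree

open RTree

/-!
Write `D = 1 − IM_p(α) > 0`. Since `p/p′ = p − 1` and the strict ancestors of a child `β` of `α`
are the ancestors of `α`, `c(β) = M(β)/D^{p−1}`, while `c(α) = g(M(α))` with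
`g(x) = x/(D + x^{p′−1})^{p−1}`; the right-hand side of the recursion at `α` is then
`g(Σ_β M(β))`. As `(p − 1)(p′ − 1) = 1`, `g(x) = (u/(D + u))^{p−1}` with `u = x^{p′−1}`, so `g` is
strictly increasing and the recursion at `α` says exactly `M(α) = Σ_β M(β)`.

Additivity is necessary because `∂T_α` is the disjoint union of the tents of the children of `α`.
Conversely, an additive `M` is the image of Lebesgue measure: give each edge `α` an interval of
length `M(α)` such that the intervals of the children of `α`, taken in the order of an enumeration
of the edges, tile that of `α`; a point of the root interval then determines the geodesic of the
edges whose intervals contain it.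
-/

open Set Function

theorem Finset.exists_mem_Ico_sum_filter_lt {α κ : Type*} [LinearOrder κ] (s : Finset α)
    {ι : α → κ} (hι : Injective ι) (w : α → ℝ) {t : ℝ} (h0 : 0 ≤ t) (ht : t < ∑ a ∈ s, w a) :
    ∃ b ∈ s, t ∈ Set.Ico (∑ a ∈ s with ι a < ι b, w a) (∑ a ∈ s with ι a < ι b, w a + w b) := by
  classical
  induction s using Finset.induction_on_max_value ι with
  | empty => simp only [Finset.sum_empty] at ht; linarith
  | insert a s ha hmax ih =>
    rw [Finset.sum_insert ha] at ht
    by_cases hts : t < ∑ x ∈ s, w x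
    · obtain ⟨b, hb, hbt⟩ := ih hts
      refine ⟨b, Finset.mem_insert_of_mem hb, ?_⟩
      rwa [Finset.filter_insert, if_neg (not_lt.2 (hmax b hb))]
    · refine ⟨a, Finset.mem_insert_self a s, ?_⟩
      have hfilter : (insert a s).filter (ι · < ι a) = s := by
        rw [Finset.filter_insert, if_neg (lt_irrefl _), Finset.filter_true_of_mem fun x hx =>
          (hmax x hx).lt_of_ne (hι.ne (ne_of_mem_of_not_mem hx ha))]
      rw [hfilter]
      exact ⟨not_lt.1 hts, by rwa [add_comm]⟩

namespace RTree

variable {T : RTree}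

instance (T : RTree) : Nonempty T.E := ⟨T.root⟩

noncomputable def children (T : RTree) (α : T.E) : Finset T.E := (T.locFin α).toFinset

@[simp]
lemma mem_children {α β : T.E} : β ∈ T.children α ↔ T.parent β = some α := by
  simp [children]

lemma coe_children (α : T.E) : (T.children α : Set T.E) = {β | T.parent β = some α} :=
  (T.locFin α).coe_toFinset

lemma exists_parent_of_ne_root {α : T.E} (h : α ≠ T.root) : ∃ β, T.parent α = some β :=
  Option.isSome_iff_exists.mp (T.parent_isSome α h)

lemma level_lt_of_parent {α β : T.E} (h : T.parent β = some α) : T.level α < T.level β := by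
  have := T.level_parent β α h
  omega

lemma eq_root_of_level_eq_zero {α : T.E} (h : T.level α = 0) : α = T.root := by
  by_contra hne
  obtain ⟨β, hβ⟩ := exists_parent_of_ne_root hne
  have := level_lt_of_parent hβ
  omega

lemma exists_parent_of_level_eq_succ {β : T.E} {n : ℕ} (h : T.level β = n + 1) :
    ∃ α, T.parent β = some α ∧ T.level α = n := by
  obtain ⟨α, hα⟩ := exists_parent_of_ne_root fun hβ : β = T.root => by
    simp [hβ, T.level_root] at h
  exact ⟨α, hα, by have := T.level_parent β α hα; omega⟩

theorem induction_on_parent {motive : T.E → Prop} (root : motive T.root)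
    (parent : ∀ {α β}, T.parent β = some α → motive α → motive β) (α : T.E) : motive α := by
  induction h : T.level α using Nat.strong_induction_on generalizing α with
  | _ n ih =>
    by_cases hα : α = T.root
    · exact hα ▸ root
    · obtain ⟨β, hβ⟩ := exists_parent_of_ne_root hα
      exact parent hβ (ih _ (h ▸ level_lt_of_parent hβ) β rfl)

lemma finite_setOf_level_eq (n : ℕ) : {α : T.E | T.level α = n}.Finite := by
  induction n with
  | zero => exact (finite_singleton T.root).subset fun α h => eq_root_of_level_eq_zero h
  | succ n ih =>
    refine (ih.biUnion fun α _ => T.locFin α).subset fun β hβ => ?_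
    obtain ⟨α, hα, hlevel⟩ := exists_parent_of_level_eq_succ hβ
    exact mem_biUnion hlevel hα

instance (T : RTree) : Countable T.E :=
  countable_univ_iff.mp <| (countable_iUnion fun n =>
    (finite_setOf_level_eq (T := T) n).countable).mono fun α _ => mem_iUnion.2 ⟨T.level α, rfl⟩

lemma Le.refl (α : T.E) : T.Le α α := Relation.ReflTransGen.refl

lemma Le.level_le {α β : T.E} (h : T.Le α β) : T.level α ≤ T.level β := by
  induction h with
  | refl => exact le_rfl
  | tail _ hstep ih => exact ih.trans (level_lt_of_parent hstep).le

lemma le_root_iff {γ : T.E} : T.Le γ T.root ↔ γ = T.root := by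
  refine ⟨fun h => eq_root_of_level_eq_zero (Nat.le_zero.1 (T.level_root ▸ h.level_le)), ?_⟩
  rintro rfl
  exact Le.refl _

lemma le_iff_of_parent {α β γ : T.E} (h : T.parent β = some α) :
    T.Le γ β ↔ γ = β ∨ T.Le γ α := by
  refine ⟨fun hγ => ?_, ?_⟩
  · rcases Relation.ReflTransGen.cases_tail hγ with rfl | ⟨δ, hγδ, hδ⟩
    · exact Or.inl rfl
    · rw [h, Option.some_inj] at hδ
      exact Or.inr (hδ ▸ hγδ)
  · rintro (rfl | hγ)
    · exact Le.refl _
    · exact hγ.tail h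

lemma setOf_le_ne_of_parent {α β : T.E} (h : T.parent β = some α) :
    {γ | T.Le γ β ∧ γ ≠ β} = {γ | T.Le γ α} := by
  ext γ
  simp only [mem_ofPred_eq, le_iff_of_parent h]
  refine ⟨fun ⟨hγ, hne⟩ => hγ.resolve_left hne, fun hγ => ⟨Or.inr hγ, ?_⟩⟩
  rintro rfl
  exact (hγ.level_le.trans_lt (level_lt_of_parent h)).false

lemma finite_setOf_le (α : T.E) : {γ | T.Le γ α}.Finite := by
  induction α using induction_on_parent with
  | root => simp [le_root_iff]
  | parent h ih =>
    simp only [le_iff_of_parent h, ofPred_or, ofPred_eq_eq_singleton]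
    exact (finite_singleton _).union ih

lemma finsum_mem_setOf_le (f : T.E → ℝ) (α : T.E) :
    ∑ᶠ γ ∈ {γ | T.Le γ α}, f γ = f α + ∑ᶠ γ ∈ {γ | T.Le γ α ∧ γ ≠ α}, f γ := by
  have hinsert : {γ | T.Le γ α} = insert α {γ | T.Le γ α ∧ γ ≠ α} := by
    ext γ
    by_cases hγ : γ = α <;> simp [hγ, Le.refl]
  rw [hinsert, finsum_mem_insert _ (fun h => h.2 rfl)
    ((finite_setOf_le α).subset fun _ h => h.1)]

lemma Boundary.level_seq (ζ : T.Boundary) (n : ℕ) : T.level (ζ.seq n) = n := by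
  induction n with
  | zero => rw [ζ.seq_zero, T.level_root]
  | succ n ih => rw [T.level_parent _ _ (ζ.seq_parent n), ih]

lemma mem_tentB_iff {ζ : T.Boundary} {α : T.E} : ζ ∈ T.tentB α ↔ ζ.seq (T.level α) = α :=
  ⟨fun ⟨n, hn⟩ => by rw [← hn, ζ.level_seq], fun h => ⟨_, h⟩⟩

lemma tentB_root : T.tentB T.root = univ :=
  eq_univ_of_forall fun ζ => ⟨0, ζ.seq_zero⟩

lemma tentB_eq_biUnion_children (α : T.E) : T.tentB α = ⋃ β ∈ T.children α, T.tentB β := by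
  ext ζ
  simp only [mem_iUnion, mem_children, exists_prop]
  constructor
  · rintro ⟨n, hn⟩
    exact ⟨ζ.seq (n + 1), hn ▸ ζ.seq_parent n, n + 1, rfl⟩
  · rintro ⟨β, hβ, hζβ⟩
    rw [mem_tentB_iff] at hζβ ⊢
    have hseq := ζ.seq_parent (T.level α)
    rwa [← T.level_parent β α hβ, hζβ, hβ, Option.some_inj, eq_comm] at hseq

lemma pairwiseDisjoint_tentB_children (α : T.E) :
    (T.children α : Set T.E).PairwiseDisjoint T.tentB := by
  intro β hβ β' hβ' hne
  refine disjoint_left.2 fun ζ hζβ hζβ' => hne ?_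
  rw [mem_tentB_iff] at hζβ hζβ'
  have hlevel : T.level β = T.level β' := by
    rw [T.level_parent β α (mem_children.1 hβ), T.level_parent β' α (mem_children.1 hβ')]
  rw [← hζβ, ← hζβ', hlevel]

lemma measurableSet_tentB (α : T.E) : MeasurableSet[T.tborel] (T.tentB α) :=
  MeasurableSpace.measurableSet_generateFrom (TopologicalSpace.GenerateOpen.basic _ ⟨α, rfl⟩)

lemma tborel_eq_generateFrom : T.tborel = .generateFrom {s | ∃ α, s = T.tentB α} := by
  let := T.ttop
  have hcountable : {s | ∃ α, s = T.tentB α}.Countable :=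
    (countable_range T.tentB).mono (by rintro _ ⟨α, rfl⟩; exact ⟨α, rfl⟩)
  have : SecondCountableTopology T.Boundary := ⟨⟨_, hcountable, rfl⟩⟩
  exact borel_eq_generateFrom_of_subbasis rfl

def IsForwardAdditive (M : T.E → ℝ) : Prop := ∀ α, M α = ∑ β ∈ T.children α, M β

lemma isForwardAdditive_of_measure (μ : @Measure T.Boundary T.tborel)
    [@IsFiniteMeasure _ T.tborel μ] {M : T.E → ℝ} (hμ : ∀ α, M α = (μ (T.tentB α)).toReal) :
    IsForwardAdditive M := by
  let := T.tborel
  intro α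
  rw [hμ α, tentB_eq_biUnion_children, measure_biUnion_finset (pairwiseDisjoint_tentB_children α)
    fun β _ => measurableSet_tentB β, ENNReal.toReal_sum fun β _ => measure_ne_top μ _]
  exact Finset.sum_congr rfl fun β _ => (hμ β).symm

section Layout

variable (M : T.E → ℝ) (ι : T.E → ℕ)

noncomputable def siblingOffset (β : T.E) : ℝ :=
  (T.parent β).elim 0 fun α => ∑ γ ∈ T.children α with ι γ < ι β, M γ

noncomputable def leftEnd (α : T.E) : ℝ := ∑ᶠ γ ∈ {γ | T.Le γ α}, siblingOffset M ι γ

noncomputable def cell (α : T.E) : Set ℝ := Ico (leftEnd M ι α) (leftEnd M ι α + M α)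

lemma measurableSet_cell (α : T.E) : MeasurableSet (cell M ι α) := measurableSet_Ico

variable {M ι}

lemma leftEnd_of_parent {α β : T.E} (h : T.parent β = some α) :
    leftEnd M ι β = leftEnd M ι α + ∑ γ ∈ T.children α with ι γ < ι β, M γ := by
  rw [leftEnd, finsum_mem_setOf_le, setOf_le_ne_of_parent h, ← leftEnd, add_comm]
  simp [siblingOffset, h]

lemma cell_subset_of_parent (hM : ∀ α, 0 ≤ M α) (hadd : IsForwardAdditive M) {α β : T.E}
    (h : T.parent β = some α) : cell M ι β ⊆ cell M ι α := by
  classical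
  have hsub : insert β {γ ∈ T.children α | ι γ < ι β} ⊆ T.children α :=
    Finset.insert_subset (mem_children.2 h) (Finset.filter_subset _ _)
  have hle := Finset.sum_le_sum_of_subset_of_nonneg hsub fun γ _ _ => hM γ
  rw [Finset.sum_insert (by simp), ← hadd α] at hle
  have hpos : 0 ≤ ∑ γ ∈ T.children α with ι γ < ι β, M γ := Finset.sum_nonneg fun γ _ => hM γ
  rw [cell, cell, leftEnd_of_parent h]
  exact Ico_subset_Ico (by linarith) (by linarith)

lemma cell_subset_cell_root (hM : ∀ α, 0 ≤ M α) (hadd : IsForwardAdditive M) (α : T.E) :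
    cell M ι α ⊆ cell M ι T.root := by
  induction α using induction_on_parent with
  | root => rfl
  | parent h ih => exact (cell_subset_of_parent hM hadd h).trans ih

lemma disjoint_cell_of_parent_eq (hM : ∀ α, 0 ≤ M α) (hι : Injective ι) {α β β' : T.E}
    (hβ : T.parent β = some α) (hβ' : T.parent β' = some α) (hne : β ≠ β') :
    Disjoint (cell M ι β) (cell M ι β') := by
  wlog hlt : ι β < ι β' generalizing β β'
  · exact (this hβ' hβ hne.symm ((not_lt.1 hlt).lt_of_ne (hι.ne hne.symm))).symm
  classical
  have hsub : insert β {γ ∈ T.children α | ι γ < ι β} ⊆ {γ ∈ T.children α | ι γ < ι β'} :=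
    Finset.insert_subset (by simp [hβ, hlt]) fun γ hγ => by
      simp only [Finset.mem_filter] at hγ ⊢
      exact ⟨hγ.1, hγ.2.trans hlt⟩
  have hle := Finset.sum_le_sum_of_subset_of_nonneg hsub fun γ _ _ => hM γ
  rw [Finset.sum_insert (by simp)] at hle
  refine disjoint_left.2 fun t htβ htβ' => ?_
  rw [cell, leftEnd_of_parent hβ] at htβ
  rw [cell, leftEnd_of_parent hβ'] at htβ'
  linarith [htβ.2, htβ'.1]

lemma eq_of_level_eq_of_mem_cell (hM : ∀ α, 0 ≤ M α) (hadd : IsForwardAdditive M)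
    (hι : Injective ι) {t : ℝ} {α α' : T.E} (hlevel : T.level α = T.level α')
    (hα : t ∈ cell M ι α) (hα' : t ∈ cell M ι α') : α = α' := by
  induction h : T.level α generalizing α α' with
  | zero => rw [eq_root_of_level_eq_zero h, eq_root_of_level_eq_zero (hlevel.symm.trans h)]
  | succ n ih =>
    obtain ⟨π, hπ, hπn⟩ := exists_parent_of_level_eq_succ h
    obtain ⟨π', hπ', hπn'⟩ := exists_parent_of_level_eq_succ (hlevel.symm.trans h)
    obtain rfl : π = π' := ih (hπn.trans hπn'.symm) (cell_subset_of_parent hM hadd hπ hα)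
      (cell_subset_of_parent hM hadd hπ' hα') hπn
    by_contra hne
    exact (disjoint_cell_of_parent_eq hM hι hπ hπ' hne).ne_of_mem hα hα' rfl

lemma exists_child_mem_cell (hadd : IsForwardAdditive M) (hι : Injective ι) {α : T.E} {t : ℝ}
    (ht : t ∈ cell M ι α) : ∃ β, T.parent β = some α ∧ t ∈ cell M ι β := by
  obtain ⟨β, hβ, hβt⟩ := (T.children α).exists_mem_Ico_sum_filter_lt hι M
    (t := t - leftEnd M ι α) (by linarith [ht.1]) (by linarith [ht.2, hadd α])
  refine ⟨β, mem_children.1 hβ, ?_⟩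
  rw [cell, leftEnd_of_parent (mem_children.1 hβ)]
  constructor <;> linarith [hβt.1, hβt.2]

lemma exists_boundary_mem_tentB_iff (hM : ∀ α, 0 ≤ M α) (hadd : IsForwardAdditive M)
    (hι : Injective ι) {t : ℝ} (ht : t ∈ cell M ι T.root) :
    ∃ ζ : T.Boundary, ∀ α, ζ ∈ T.tentB α ↔ t ∈ cell M ι α := by
  let next : T.E → T.E := fun α => Classical.epsilon fun β => T.parent β = some α ∧ t ∈ cell M ι β
  have hnext : ∀ α, t ∈ cell M ι α → T.parent (next α) = some α ∧ t ∈ cell M ι (next α) :=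
    fun α hα => Classical.epsilon_spec (exists_child_mem_cell hadd hι hα)
  have hmem : ∀ n, t ∈ cell M ι (next^[n] T.root) := by
    intro n
    induction n with
    | zero => exact ht
    | succ n ih => rw [iterate_succ_apply']; exact (hnext _ ih).2
  let ζ : T.Boundary := ⟨fun n => next^[n] T.root, rfl, fun n => by
    rw [iterate_succ_apply']; exact (hnext _ (hmem n)).1⟩
  refine ⟨ζ, fun α => ⟨?_, fun hα => ⟨T.level α, ?_⟩⟩⟩
  · rintro ⟨n, rfl⟩
    exact hmem n
  · exact eq_of_level_eq_of_mem_cell hM hadd hι (ζ.level_seq _) (hmem _) hα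

end Layout

lemma exists_measure_of_isForwardAdditive {M : T.E → ℝ} (hM : ∀ α, 0 ≤ M α)
    (hadd : IsForwardAdditive M) :
    ∃ μ : @Measure T.Boundary T.tborel,
      @IsFiniteMeasure _ T.tborel μ ∧ ∀ α, M α = (μ (T.tentB α)).toReal := by
  let := T.tborel
  obtain ⟨ι, hι⟩ := Countable.exists_injective_nat T.E
  choose Ψ hΨ using fun t : cell M ι T.root => exists_boundary_mem_tentB_iff hM hadd hι t.2
  have hpreimage : ∀ α, Ψ ⁻¹' T.tentB α = Subtype.val ⁻¹' cell M ι α :=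
    fun α => ext fun t => hΨ t α
  have hΨ_meas : @Measurable _ _ _ T.tborel Ψ := by
    rw [tborel_eq_generateFrom]
    refine measurable_generateFrom ?_
    rintro _ ⟨α, rfl⟩
    rw [hpreimage]
    exact measurable_subtype_coe (measurableSet_cell M ι α)
  let μ : Measure T.Boundary := ((volume : Measure ℝ).comap Subtype.val).map Ψ
  have hμ : ∀ α, μ (T.tentB α) = ENNReal.ofReal (M α) := by
    intro α
    rw [Measure.map_apply hΨ_meas (measurableSet_tentB α), hpreimage,
      comap_subtype_coe_apply (measurableSet_cell M ι T.root), Subtype.image_preimage_coe,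
      inter_eq_right.2 (cell_subset_cell_root hM hadd α), cell, Real.volume_Ico,
      add_sub_cancel_left]
  refine ⟨μ, ⟨?_⟩, fun α => ?_⟩
  · rw [← tentB_root, hμ]
    exact ENNReal.ofReal_lt_top
  · rw [hμ, ENNReal.toReal_ofReal (hM α)]

end RTree

section ContinuedFraction

variable {p q : ℝ}

noncomputable def cfStep (p q D x : ℝ) : ℝ := x / (D + x ^ (q - 1)) ^ (p - 1)

lemma Real.HolderConjugate.sub_one_mul_sub_one (hpq : p.HolderConjugate q) :
    (p - 1) * (q - 1) = 1 := by
  linear_combination hpq.sub_one_mul_conj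

lemma cfStep_eq_rpow (hpq : p.HolderConjugate q) {D x : ℝ} (hD : 0 < D) (hx : 0 ≤ x) :
    cfStep p q D x = (x ^ (q - 1) / (D + x ^ (q - 1))) ^ (p - 1) := by
  have hxq : 0 ≤ x ^ (q - 1) := Real.rpow_nonneg hx _
  rw [cfStep, Real.div_rpow hxq (by positivity), ← Real.rpow_mul hx, mul_comm,
    hpq.sub_one_mul_sub_one, Real.rpow_one]

lemma strictMonoOn_cfStep (hpq : p.HolderConjugate q) {D : ℝ} (hD : 0 < D) :
    StrictMonoOn (cfStep p q D) (Ici 0) := by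
  intro x hx y hy hxy
  have hxq : 0 ≤ x ^ (q - 1) := Real.rpow_nonneg hx _
  have hxy_q : x ^ (q - 1) < y ^ (q - 1) :=
    Real.rpow_lt_rpow hx hxy (sub_pos.2 hpq.symm.lt)
  rw [cfStep_eq_rpow hpq hD hx, cfStep_eq_rpow hpq hD hy]
  refine Real.rpow_lt_rpow (by positivity) ?_ hpq.sub_one_pos
  rw [div_lt_div_iff₀ (by positivity) (by linarith)]
  nlinarith

lemma cfStep_one_div_rpow (hpq : p.HolderConjugate q) {D x : ℝ} (hD : 0 < D) (hx : 0 ≤ x) :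
    cfStep p q 1 (x / D ^ (p - 1)) = cfStep p q D x := by
  have hscale : (x / D ^ (p - 1)) ^ (q - 1) = x ^ (q - 1) / D := by
    rw [Real.div_rpow hx (by positivity), ← Real.rpow_mul hD.le, hpq.sub_one_mul_sub_one,
      Real.rpow_one]
  rw [cfStep, cfStep, hscale, one_add_div hD.ne', Real.div_rpow (by positivity) hD.le]
  have : 0 < (D + x ^ (q - 1)) ^ (p - 1) := by positivity
  have : 0 < D ^ (p - 1) := by positivity
  field_simp

end ContinuedFraction

namespace RTree

variable {T : RTree} {p q : ℝ}

noncomputable def rescaled (p q : ℝ) (M : T.E → ℝ) (α : T.E) : ℝ :=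
  M α / (1 - ∑ᶠ γ ∈ {γ : T.E | T.Le γ α ∧ γ ≠ α}, M γ ^ (q - 1)) ^ (p / q)

lemma rescaled_eq_cfStep (hpq : p.HolderConjugate q) (M : T.E → ℝ) (α : T.E) :
    rescaled p q M α = cfStep p q (1 - ∑ᶠ γ ∈ {γ | T.Le γ α}, M γ ^ (q - 1)) (M α) := by
  rw [rescaled, cfStep, finsum_mem_setOf_le, hpq.div_conj_eq_sub_one]
  ring_nf

lemma rescaled_of_parent (hpq : p.HolderConjugate q) (M : T.E → ℝ) {α β : T.E}
    (h : T.parent β = some α) :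
    rescaled p q M β = M β / (1 - ∑ᶠ γ ∈ {γ | T.Le γ α}, M γ ^ (q - 1)) ^ (p - 1) := by
  rw [rescaled, setOf_le_ne_of_parent h, hpq.div_conj_eq_sub_one]

lemma rescaled_eq_cfStep_iff (hpq : p.HolderConjugate q) {M : T.E → ℝ} (hM : ∀ α, 0 ≤ M α)
    {α : T.E} (hlt : ∑ᶠ γ ∈ {γ | T.Le γ α}, M γ ^ (q - 1) < 1) :
    rescaled p q M α = cfStep p q 1 (∑ᶠ β ∈ {β | T.parent β = some α}, rescaled p q M β) ↔
      M α = ∑ β ∈ T.children α, M β := by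
  have hD : 0 < 1 - ∑ᶠ γ ∈ {γ | T.Le γ α}, M γ ^ (q - 1) := sub_pos.2 hlt
  have hsum : 0 ≤ ∑ β ∈ T.children α, M β := Finset.sum_nonneg fun β _ => hM β
  rw [← coe_children, finsum_mem_coe_finset,
    Finset.sum_congr rfl fun β hβ => rescaled_of_parent hpq M (mem_children.1 hβ),
    ← Finset.sum_div, cfStep_one_div_rpow hpq hD hsum, rescaled_eq_cfStep hpq]
  exact (strictMonoOn_cfStep hpq hD).injOn.eq_iff (hM α) hsum

end RTree

theorem stmt18_general (T : RTree)
    (p q : ℝ) (hp : 1 < p) (hpq : 1 / p + 1 / q = 1) (M : T.E → ℝ)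
    (hM : ∀ α : T.E, 0 ≤ M α)
    (hlt : ∀ α : T.E, ∑ᶠ γ ∈ {γ : T.E | T.Le γ α}, M γ ^ (q - 1) < 1) :
    letI c : T.E → ℝ := fun α =>
      M α / (1 - ∑ᶠ γ ∈ {γ : T.E | T.Le γ α ∧ γ ≠ α}, M γ ^ (q - 1)) ^ (p / q)
    ((∃ μ : @Measure T.Boundary T.tborel,
        @IsFiniteMeasure _ _ μ ∧ ∀ α : T.E, M α = (μ (T.tentB α)).toReal) ↔
      ∀ α : T.E,
        c α = (∑ᶠ β ∈ {β : T.E | T.parent β = some α}, c β) /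
          (1 + (∑ᶠ β ∈ {β : T.E | T.parent β = some α}, c β) ^ (q - 1)) ^ (p - 1)) := by
  have hconj : p.HolderConjugate q :=
    Real.holderConjugate_iff.2 ⟨hp, by simpa only [one_div] using hpq⟩
  refine Iff.trans ?_ (forall_congr' fun α => rescaled_eq_cfStep_iff hconj hM (hlt α)).symm
  exact ⟨fun ⟨μ, _, hμ⟩ => isForwardAdditive_of_measure μ hμ,
    exists_measure_of_isForwardAdditive hM⟩

/-- Branched continued fractions: let `M : E(T) → ℝ₊` with `IM_p < 1` at every
vertex of a locally finite leafless rooted tree, and define the rescaled function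
`c(α) = M(α)/(1 − IM_p(b(α)))^{p/p′}`.  Then `M` is the co-potential of a
positive (finite Borel) measure on `∂T` if and only if, for every edge `α`,
`c(α) = S/(1 + S^{p′−1})^{p−1}` where `S = Σ_{β child of α} c(β)`. -/
theorem stmt18 (T : RTree) (hleaf : ∀ α : T.E, ∃ β, T.parent β = some α)
    (p q : ℝ) (hp : 1 < p) (hpq : 1 / p + 1 / q = 1) (M : T.E → ℝ)
    (hM : ∀ α : T.E, 0 ≤ M α)
    (hlt : ∀ α : T.E, ∑ᶠ γ ∈ {γ : T.E | T.Le γ α}, M γ ^ (q - 1) < 1) :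
    letI c : T.E → ℝ := fun α =>
      M α / (1 - ∑ᶠ γ ∈ {γ : T.E | T.Le γ α ∧ γ ≠ α}, M γ ^ (q - 1)) ^ (p / q)
    ((∃ μ : @Measure T.Boundary T.tborel,
        @IsFiniteMeasure _ _ μ ∧ ∀ α : T.E, M α = (μ (T.tentB α)).toReal) ↔
      ∀ α : T.E,
        c α = (∑ᶠ β ∈ {β : T.E | T.parent β = some α}, c β) /
          (1 + (∑ᶠ β ∈ {β : T.E | T.parent β = some α}, c β) ^ (q - 1)) ^ (p - 1)) :=
  stmt18_general T p q hp hpq M hM hlt
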